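/- arXiv:1102.5424 — 2 statements merged into one kernel-verified Lean document; each statement's English description precedes it below -/
import Mathlib

section
/- The lattice of all filters of a pseudo hoop is a distributive lattice under inclusion; moreover it satisfies the infinite distributive law F ∩ ⋁ᵢ Fᵢ = ⋁ᵢ (F ∩ Fᵢ). -/
universe u

structure PseudoHoop (M : Type u) where
  mul : M → M → M
  one : M
  imp : M → M → M
  rimp : M → M → M
  mul_one : ∀ x, mul x one = x
  one_mul : ∀ x, mul one x = x
  imp_self : ∀ x, imp x x = one
  rimp_self : ∀ x, rimp x x = one
  mul_imp : ∀ x y z, imp (mul x y) z = imp x (imp y z)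
  mul_rimp : ∀ x y z, rimp (mul x y) z = rimp y (rimp x z)
  div1 : ∀ x y, mul (imp x y) x = mul (imp y x) y
  div2 : ∀ x y, mul (imp x y) x = mul x (rimp x y)
  div3 : ∀ x y, mul x (rimp x y) = mul y (rimp y x)

namespace PseudoHoop

variable {M : Type u} (H : PseudoHoop M)

/-- The induced order: x ≤ y iff x → y = 1. -/
def le (x y : M) : Prop := H.imp x y = H.one

/-- The derived meet: x ∧ y = (x → y) ⊙ x. -/
def meet (x y : M) : M := H.mul (H.imp x y) x

/-- Powers: a^0 = 1, a^(n+1) = a^n ⊙ a. -/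
def pow (a : M) : ℕ → M
  | 0 => H.one
  | n + 1 => H.mul (pow a n) a

/-- j is the least upper bound of x and y. -/
def IsJoin (x y j : M) : Prop :=
  H.le x j ∧ H.le y j ∧ ∀ c, H.le x c → H.le y c → H.le j c

/-- Prelinearity: (x→y) ∨ (y→x) and (x⇝y) ∨ (y⇝x) exist and equal 1. -/
def Prelinear : Prop :=
  ∀ x y, H.IsJoin (H.imp x y) (H.imp y x) H.one ∧ H.IsJoin (H.rimp x y) (H.rimp y x) H.one

/-- Basic pseudo hoop. -/
def Basic : Prop :=
  (∀ x y z, H.le (H.imp (H.imp x y) z) (H.imp (H.imp (H.imp y x) z) z)) ∧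
  (∀ x y z, H.le (H.rimp (H.rimp x y) z) (H.rimp (H.rimp (H.rimp y x) z) z))

/-- Filters: contain 1, closed under ⊙ and upward closed. -/
def IsFilter (F : Set M) : Prop :=
  H.one ∈ F ∧ (∀ x ∈ F, ∀ y ∈ F, H.mul x y ∈ F) ∧ (∀ x ∈ F, ∀ y, H.le x y → y ∈ F)

/-- Filter generated by a set. -/
def filterGen (S : Set M) : Set M := ⋂₀ {F | H.IsFilter F ∧ S ⊆ F}

/-- Prime filter. -/
def IsPrime (F : Set M) : Prop :=
  H.IsFilter F ∧
    ∀ F₁ F₂, H.IsFilter F₁ → H.IsFilter F₂ → F₁ ∩ F₂ ⊆ F → F₁ ⊆ F ∨ F₂ ⊆ F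

/-- V is a value of g: a filter maximal with respect to not containing g. -/
def IsValueOf (V : Set M) (g : M) : Prop :=
  H.IsFilter V ∧ g ∉ V ∧ ∀ W, H.IsFilter W → V ⊆ W → g ∉ W → W = V

/-- V is a value of M: a value of some g ≠ 1. -/
def IsValue (V : Set M) : Prop := ∃ g, g ≠ H.one ∧ H.IsValueOf V g

end PseudoHoop

/-!
The filter generated by a set consists of the elements above finite products of its members.
Given `a ∈ F` above a product `f₁ ⊙ ⋯ ⊙ fₙ` with each `fⱼ` in some `Fᵢ`, repeated Riesz
decomposition rewrites `a` as a product `g₁ ⊙ ⋯ ⊙ gₙ` with `fⱼ ≤ gⱼ` and `a ≤ gⱼ`; each `gⱼ`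
then lies in `F ∩ Fᵢ`, so `a ∈ ⋁ᵢ (F ∩ Fᵢ)`.
-/

namespace PseudoHoop

variable {M : Type u} (H : PseudoHoop M)

theorem le_refl (x : M) : H.le x x := H.imp_self x

theorem one_imp_imp (x y : M) : H.imp H.one (H.imp x y) = H.imp x y := by
  rw [← H.mul_imp, H.one_mul]

theorem imp_one (x : M) : H.imp x H.one = H.one := by
  have one_imp_imp_one (y : M) : H.imp (H.imp H.one y) H.one = H.one := by
    rw [← H.mul_one (H.imp H.one y), ← H.div1 y H.one, H.mul_imp, H.imp_self]
  have hx : H.mul (H.imp (H.imp H.one x) x) (H.imp H.one x) = x := by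
    rw [← H.div1, ← H.mul_imp, H.mul_one, H.imp_self, H.one_mul]
  rw [← hx, H.mul_imp, one_imp_imp_one, ← H.one_imp_imp (H.imp H.one x) x, one_imp_imp_one]

theorem le_one (x : M) : H.le x H.one := H.imp_one x

theorem le_antisymm {a b : M} (hab : H.le a b) (hba : H.le b a) : a = b := by
  have h := H.div1 a b
  rw [le] at hab hba
  rwa [hab, hba, H.one_mul, H.one_mul] at h

theorem le_trans {a b c : M} (hab : H.le a b) (hbc : H.le b c) : H.le a c := by
  rw [le] at hab hbc ⊢
  have ha : H.mul (H.imp b a) b = a := by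
    rw [← H.div1, hab, H.one_mul]
  rw [← ha, H.mul_imp, hbc, H.imp_one]

theorem le_iff_rimp_eq_one {a b : M} : H.le a b ↔ H.rimp a b = H.one := by
  constructor
  · intro hab
    have ha : H.mul a (H.rimp a b) = a := by
      rw [← H.div2, show H.imp a b = H.one from hab, H.one_mul]
    rw [← H.rimp_self (H.rimp a b), ← H.mul_rimp, ha]
  · intro hab
    have ha : H.mul (H.imp a b) a = a := by
      rw [H.div2, hab, H.mul_one]
    show H.imp a b = H.one
    rw [← H.imp_self (H.imp a b), ← H.mul_imp, ha]

theorem rimp_one (x : M) : H.rimp x H.one = H.one :=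
  H.le_iff_rimp_eq_one.mp (H.le_one x)

theorem mul_le_left (x y : M) : H.le (H.mul x y) x := by
  rw [le_iff_rimp_eq_one, H.mul_rimp, H.rimp_self, H.rimp_one]

theorem mul_le_right (x y : M) : H.le (H.mul x y) y := by
  show H.imp (H.mul x y) y = H.one
  rw [H.mul_imp, H.imp_self, H.imp_one]

theorem mul_le_iff_le_imp {a b c : M} : H.le (H.mul a b) c ↔ H.le a (H.imp b c) := by
  rw [le, le, H.mul_imp]

theorem mul_le_iff_le_rimp {a b c : M} : H.le (H.mul a b) c ↔ H.le b (H.rimp a c) := by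
  rw [le_iff_rimp_eq_one, le_iff_rimp_eq_one, H.mul_rimp]

theorem mul_assoc (a b c : M) : H.mul (H.mul a b) c = H.mul a (H.mul b c) := by
  have rimp_eq (z : M) : H.rimp (H.mul (H.mul a b) c) z = H.rimp (H.mul a (H.mul b c)) z := by
    simp only [H.mul_rimp]
  apply H.le_antisymm <;> rw [le_iff_rimp_eq_one]
  · rw [rimp_eq, H.rimp_self]
  · rw [← rimp_eq, H.rimp_self]

theorem mul_le_mul {a b c d : M} (hab : H.le a b) (hcd : H.le c d) :
    H.le (H.mul a c) (H.mul b d) := by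
  have hac : H.le (H.mul a c) (H.mul b c) :=
    H.mul_le_iff_le_imp.mpr <| H.le_trans hab <| H.mul_le_iff_le_imp.mp (H.le_refl _)
  have hbc : H.le (H.mul b c) (H.mul b d) :=
    H.mul_le_iff_le_rimp.mpr <| H.le_trans hcd <| H.mul_le_iff_le_rimp.mp (H.le_refl _)
  exact H.le_trans hac hbc

/-- Riesz decomposition, with `b₁ = c → a` and `c₁ = b₁ ⇝ a`. -/
theorem riesz_decomposition {a b c : M} (h : H.le (H.mul b c) a) :
    ∃ b₁ c₁, H.le b b₁ ∧ H.le c c₁ ∧ a = H.mul b₁ c₁ := by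
  refine ⟨H.imp c a, H.rimp (H.imp c a) a, H.mul_le_iff_le_imp.mp h, ?_, ?_⟩
  · rw [← mul_le_iff_le_rimp, H.div1]
    exact H.mul_le_right _ _
  · have ha : H.rimp a (H.imp c a) = H.one :=
      H.le_iff_rimp_eq_one.mp (H.mul_le_iff_le_imp.mp (H.mul_le_left a c))
    rw [H.div3, ha, H.mul_one]

variable {H} in
theorem IsFilter.mem_of_le {F : Set M} (hF : H.IsFilter F) {x y : M} (hx : x ∈ F)
    (hxy : H.le x y) : y ∈ F :=
  hF.2.2 x hx y hxy

def listProd : List M → M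
  | [] => H.one
  | a :: l => H.mul a (listProd l)

theorem listProd_append (l₁ l₂ : List M) :
    H.listProd (l₁ ++ l₂) = H.mul (H.listProd l₁) (H.listProd l₂) := by
  induction l₁ with
  | nil => exact (H.one_mul _).symm
  | cons a l ih => rw [List.cons_append, listProd, listProd, ih, H.mul_assoc]

variable {H} in
theorem IsFilter.listProd_mem {F : Set M} (hF : H.IsFilter F) {l : List M}
    (hl : ∀ a ∈ l, a ∈ F) : H.listProd l ∈ F := by
  induction l with
  | nil => exact hF.1
  | cons a l ih =>
    exact hF.2.1 a (hl a List.mem_cons_self) _ (ih fun b hb => hl b (List.mem_cons_of_mem a hb))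

theorem isFilter_setOf_listProd_le (S : Set M) :
    H.IsFilter {x | ∃ l : List M, (∀ a ∈ l, a ∈ S) ∧ H.le (H.listProd l) x} := by
  refine ⟨⟨[], by simp, H.le_refl _⟩, ?_, ?_⟩
  · rintro x ⟨l₁, hl₁, hx⟩ y ⟨l₂, hl₂, hy⟩
    refine ⟨l₁ ++ l₂, fun a ha => (List.mem_append.mp ha).elim (hl₁ a) (hl₂ a), ?_⟩
    rw [listProd_append]
    exact H.mul_le_mul hx hy
  · rintro x ⟨l, hl, hx⟩ y hxy
    exact ⟨l, hl, H.le_trans hx hxy⟩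

theorem mem_filterGen_iff {S : Set M} {x : M} :
    x ∈ H.filterGen S ↔ ∃ l : List M, (∀ a ∈ l, a ∈ S) ∧ H.le (H.listProd l) x := by
  constructor
  · intro hx
    refine Set.mem_sInter.mp hx _ ⟨H.isFilter_setOf_listProd_le S, fun a ha => ⟨[a], ?_, ?_⟩⟩
    · simpa using ha
    · rw [listProd, listProd, H.mul_one]
      exact H.le_refl a
  · rintro ⟨l, hl, hx⟩
    exact Set.mem_sInter.mpr fun F ⟨hF, hSF⟩ =>
      hF.mem_of_le (hF.listProd_mem fun a ha => hSF (hl a ha)) hx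

theorem filterGen_subset {F S : Set M} (hF : H.IsFilter F) (hS : S ⊆ F) : H.filterGen S ⊆ F :=
  Set.sInter_subset_of_mem ⟨hF, hS⟩

theorem filterGen_mono {S T : Set M} (h : S ⊆ T) : H.filterGen S ⊆ H.filterGen T :=
  Set.sInter_subset_sInter fun _ ⟨hF, hTF⟩ => ⟨hF, h.trans hTF⟩

theorem exists_listProd_eq_of_listProd_le {l : List M} {a : M} (h : H.le (H.listProd l) a) :
    ∃ l' : List M, (∀ b ∈ l', H.le a b ∧ ∃ c ∈ l, H.le c b) ∧ a = H.listProd l' := by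
  induction l generalizing a with
  | nil => exact ⟨[], by simp, H.le_antisymm (H.le_one a) h⟩
  | cons c l ih =>
    obtain ⟨c₁, d, hcc₁, hd, rfl⟩ := H.riesz_decomposition h
    obtain ⟨l', hl', rfl⟩ := ih hd
    refine ⟨c₁ :: l', ?_, rfl⟩
    rintro b (_ | ⟨_, hb⟩)
    · exact ⟨H.mul_le_left _ _, c, List.mem_cons_self, hcc₁⟩
    · obtain ⟨hlb, c', hc', hc'b⟩ := hl' b hb
      exact ⟨H.le_trans (H.mul_le_right _ _) hlb, c', List.mem_cons_of_mem c hc', hc'b⟩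

theorem inter_filterGen_iUnion {ι : Sort*} {F : Set M} {Fi : ι → Set M} (hF : H.IsFilter F)
    (hFi : ∀ i, H.IsFilter (Fi i)) :
    F ∩ H.filterGen (⋃ i, Fi i) = H.filterGen (⋃ i, F ∩ Fi i) := by
  refine Set.Subset.antisymm ?_ (Set.subset_inter ?_ ?_)
  · rintro a ⟨haF, ha⟩
    obtain ⟨l, hl, hla⟩ := H.mem_filterGen_iff.mp ha
    obtain ⟨l', hl', rfl⟩ := H.exists_listProd_eq_of_listProd_le hla
    refine H.mem_filterGen_iff.mpr ⟨l', fun b hb => ?_, H.le_refl _⟩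
    obtain ⟨hab, c, hc, hcb⟩ := hl' b hb
    obtain ⟨i, hci⟩ := Set.mem_iUnion.mp (hl c hc)
    exact Set.mem_iUnion.mpr ⟨i, hF.mem_of_le haF hab, (hFi i).mem_of_le hci hcb⟩
  · exact H.filterGen_subset hF (Set.iUnion_subset fun i => Set.inter_subset_left)
  · exact H.filterGen_mono (Set.iUnion_mono fun i => Set.inter_subset_right)

end PseudoHoop

theorem pseudoHoop_filters_distributive {M : Type u} (H : PseudoHoop M) :
    (∀ F G K : Set M, H.IsFilter F → H.IsFilter G → H.IsFilter K →
      F ∩ H.filterGen (G ∪ K) = H.filterGen ((F ∩ G) ∪ (F ∩ K))) ∧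
    (∀ (ι : Type u) (F : Set M) (Fi : ι → Set M), H.IsFilter F →
      (∀ i, H.IsFilter (Fi i)) →
      F ∩ H.filterGen (⋃ i, Fi i) = H.filterGen (⋃ i, F ∩ Fi i)) := by
  refine ⟨fun F G K hF hG hK => ?_, fun ι F Fi hF hFi => H.inter_filterGen_iUnion hF hFi⟩
  have hGK : ∀ b, H.IsFilter (cond b G K) := by
    rintro (_ | _) <;> assumption
  rw [Set.union_eq_iUnion, Set.union_eq_iUnion, H.inter_filterGen_iUnion hF hGK]
  congr 2 with b
  cases b <;> rfl
end

section
/- In a pseudo hoop M satisfying prelinearity and the inequality x² ⊙ y² ≤ y ⊙ x, for any filters F and G: F ⊙ G = F ∨ G = G ⊙ F, where F ⊙ G = {f ⊙ g : f ∈ F, g ∈ G} and F ∨ G is the filter join. -/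
universe u

section Aux

variable {M : Type u} (H : PseudoHoop M)

lemma ph_antisymm {x y : M} (h1 : H.imp x y = H.one) (h2 : H.imp y x = H.one) : x = y := by
  have h := H.div1 x y
  rw [h1, h2, H.one_mul, H.one_mul] at h
  exact h

lemma ph_a_le_one_imp (a : M) : H.imp a (H.imp H.one a) = H.one := by
  have h := H.mul_imp a H.one a
  rw [H.mul_one, H.imp_self] at h
  exact h.symm

lemma ph_one_imp_eq (a : M) : H.imp H.one a = H.mul (H.imp a H.one) a := by
  have h := H.div1 H.one a
  rw [H.mul_one] at h
  exact h

lemma ph_d8 (a : M) :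
    H.mul (H.imp (H.imp a H.one) H.one) (H.mul (H.imp a H.one) a) = a := by
  have h := H.div1 (H.imp H.one a) a
  rw [ph_a_le_one_imp H a, H.one_mul] at h
  rw [ph_one_imp_eq H a] at h
  rw [H.mul_imp, H.imp_self] at h
  exact h

lemma ph_star3 (a : M) :
    H.imp (H.imp (H.imp a H.one) H.one) H.one = H.one := by
  have h := H.mul_imp (H.imp (H.imp a H.one) H.one) (H.mul (H.imp a H.one) a)
      (H.mul (H.imp a H.one) a)
  rw [ph_d8 H a, H.imp_self, ← ph_one_imp_eq H a, ph_a_le_one_imp H a] at h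
  exact h.symm

lemma ph_star2 (a : M) : H.imp (H.imp a H.one) H.one = H.one := by
  have t2 : H.mul (H.imp (H.imp a H.one) H.one) (H.imp a H.one) = H.imp a H.one := by
    have h := ph_d8 H (H.imp a H.one)
    rw [ph_star3 H a, H.one_mul] at h
    exact h
  have h2 := H.mul_imp (H.imp (H.imp a H.one) H.one) (H.imp a H.one) H.one
  rw [t2, H.imp_self] at h2
  exact h2

lemma ph_j_fix (a : M) : H.mul (H.imp a H.one) a = a := by
  have h := ph_d8 H a
  rw [ph_star2 H a, H.one_mul] at h
  exact h

lemma ph_imp_one (a : M) : H.imp a H.one = H.one := by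
  have h2 := H.mul_imp (H.imp a H.one) a H.one
  rw [ph_j_fix H a, H.imp_self] at h2
  exact h2

lemma ph_one_imp (a : M) : H.imp H.one a = a := by
  rw [ph_one_imp_eq H a, ph_j_fix H a]

lemma ph_one_rimp (a : M) : H.rimp H.one a = a := by
  have h1 := H.div2 a H.one
  have h2 := H.div3 a H.one
  rw [ph_imp_one H a, H.one_mul] at h1
  rw [H.one_mul] at h2
  rw [← h2, ← h1]

lemma ph_rimp_one (a : M) : H.rimp a H.one = H.one := by
  have h2 := H.div3 a H.one
  rw [H.one_mul, ph_one_rimp H a] at h2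
  have h3 := H.mul_rimp a (H.rimp a H.one) H.one
  rw [h2, H.rimp_self] at h3
  exact h3

lemma ph_le_iff_rimp {x y : M} : H.le x y ↔ H.rimp x y = H.one := by
  unfold PseudoHoop.le
  constructor
  · intro h
    have h1 := H.div2 x y
    have h2 := H.div3 x y
    rw [h, H.one_mul] at h1
    have hx : x = H.mul y (H.rimp y x) := h1.trans h2
    have h3 := H.mul_rimp y (H.rimp y x) y
    rw [← hx, H.rimp_self, ph_rimp_one H] at h3
    exact h3
  · intro h
    have h2 := H.div3 x y
    rw [h, H.mul_one] at h2
    have h1 := H.div2 y x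
    have hx : x = H.mul (H.imp y x) y := h2.trans h1.symm
    have h3 := H.mul_imp (H.imp y x) y y
    rw [← hx, H.imp_self, ph_imp_one H] at h3
    exact h3

lemma ph_le_trans {x y z : M} (h1 : H.le x y) (h2 : H.le y z) : H.le x z := by
  unfold PseudoHoop.le at *
  have hx : x = H.mul (H.imp y x) y := by
    have h := H.div1 x y
    rw [h1, H.one_mul] at h
    exact h
  have h3 := H.mul_imp (H.imp y x) y z
  rw [← hx, h2, ph_imp_one H] at h3
  exact h3

lemma ph_mul_le_left (x y : M) : H.le (H.mul x y) x := by
  rw [ph_le_iff_rimp H]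
  rw [H.mul_rimp, H.rimp_self, ph_rimp_one H]

lemma ph_mul_le_right (x y : M) : H.le (H.mul x y) y := by
  unfold PseudoHoop.le
  rw [H.mul_imp, H.imp_self, ph_imp_one H]

lemma ph_mul_le_mul_right {a b : M} (c : M) (h : H.le a b) :
    H.le (H.mul a c) (H.mul b c) := by
  have hb : H.le b (H.imp c (H.mul b c)) := by
    unfold PseudoHoop.le
    rw [← H.mul_imp, H.imp_self]
  have h2 := ph_le_trans H h hb
  unfold PseudoHoop.le at h2 ⊢
  rw [H.mul_imp]
  exact h2

lemma ph_mul_le_mul_left {a b : M} (c : M) (h : H.le a b) :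
    H.le (H.mul c a) (H.mul c b) := by
  have hb : H.le b (H.rimp c (H.mul c b)) := by
    rw [ph_le_iff_rimp H, ← H.mul_rimp, H.rimp_self]
  have h2 := ph_le_trans H h hb
  rw [ph_le_iff_rimp H] at h2 ⊢
  rw [H.mul_rimp]
  exact h2

lemma ph_mul_assoc (a b c : M) :
    H.mul (H.mul a b) c = H.mul a (H.mul b c) := by
  have key : ∀ z, H.imp (H.mul (H.mul a b) c) z = H.imp (H.mul a (H.mul b c)) z := by
    intro z
    simp only [H.mul_imp]
  apply ph_antisymm H
  · rw [key, H.imp_self]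
  · rw [← key (H.mul (H.mul a b) c), H.imp_self]

lemma ph_riesz {a b c : M} (h : H.le (H.mul b c) a) :
    ∃ b₁ c₁, H.le b b₁ ∧ H.le c c₁ ∧ a = H.mul b₁ c₁ := by
  refine ⟨H.imp (H.rimp b a) a, H.rimp b a, ?_, ?_, ?_⟩
  · unfold PseudoHoop.le
    rw [← H.mul_imp, H.div3]
    exact ph_mul_le_left H a (H.rimp a b)
  · rw [ph_le_iff_rimp H] at h ⊢
    rw [← H.mul_rimp]
    exact h
  · have h1 := H.div1 (H.rimp b a) a
    have ha : H.le a (H.rimp b a) := by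
      rw [ph_le_iff_rimp H, ← H.mul_rimp, ← ph_le_iff_rimp H]
      exact ph_mul_le_right H b a
    unfold PseudoHoop.le at ha
    rw [ha, H.one_mul] at h1
    exact h1.symm

lemma ph_pow_two (x : M) : H.pow x 2 = H.mul x x := by
  have h : H.pow x 2 = H.mul (H.mul H.one x) x := rfl
  rw [h, H.one_mul]

lemma ph_image2_eq_filterGen
    (hineq : ∀ x y : M, H.le (H.mul (H.pow x 2) (H.pow y 2)) (H.mul y x))
    (F G : Set M) (hF : H.IsFilter F) (hG : H.IsFilter G) :
    Set.image2 H.mul F G = H.filterGen (F ∪ G) := by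
  obtain ⟨h1F, hmF, huF⟩ := hF
  obtain ⟨h1G, hmG, huG⟩ := hG
  have hineq' : ∀ x y : M, H.le (H.mul (H.mul x x) (H.mul y y)) (H.mul y x) := by
    intro x y
    have h := hineq x y
    rwa [ph_pow_two H, ph_pow_two H] at h
  have hup : ∀ x ∈ Set.image2 H.mul F G, ∀ y, H.le x y → y ∈ Set.image2 H.mul F G := by
    rintro x ⟨f, hf, g, hg, rfl⟩ y hy
    obtain ⟨f₁, g₁, hff, hgg, rfl⟩ := ph_riesz H hy
    exact ⟨f₁, huF f hf f₁ hff, g₁, huG g hg g₁ hgg, rfl⟩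
  have hsub : F ∪ G ⊆ Set.image2 H.mul F G := by
    rintro x (hx | hx)
    · exact ⟨x, hx, H.one, h1G, H.mul_one x⟩
    · exact ⟨H.one, h1F, x, hx, H.one_mul x⟩
  have hfil : H.IsFilter (Set.image2 H.mul F G) := by
    refine ⟨⟨H.one, h1F, H.one, h1G, H.mul_one H.one⟩, ?_, hup⟩
    rintro x ⟨f₁, hf₁, g₁, hg₁, rfl⟩ y ⟨f₂, hf₂, g₂, hg₂, rfl⟩
    have hf : H.mul f₁ (H.mul f₂ f₂) ∈ F := hmF f₁ hf₁ _ (hmF f₂ hf₂ f₂ hf₂)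
    have hg : H.mul (H.mul g₁ g₁) g₂ ∈ G := hmG _ (hmG g₁ hg₁ g₁ hg₁) g₂ hg₂
    apply hup _ ⟨_, hf, _, hg, rfl⟩
    have step : H.le (H.mul (H.mul f₂ f₂) (H.mul g₁ g₁)) (H.mul g₁ f₂) := hineq' f₂ g₁
    have e1 : H.mul (H.mul f₁ (H.mul f₂ f₂)) (H.mul (H.mul g₁ g₁) g₂)
        = H.mul f₁ (H.mul (H.mul (H.mul f₂ f₂) (H.mul g₁ g₁)) g₂) := by
      rw [ph_mul_assoc H f₁ (H.mul f₂ f₂) (H.mul (H.mul g₁ g₁) g₂),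
        ← ph_mul_assoc H (H.mul f₂ f₂) (H.mul g₁ g₁) g₂]
    have e2 : H.mul (H.mul f₁ g₁) (H.mul f₂ g₂)
        = H.mul f₁ (H.mul (H.mul g₁ f₂) g₂) := by
      rw [ph_mul_assoc H f₁ g₁ (H.mul f₂ g₂), ← ph_mul_assoc H g₁ f₂ g₂]
    rw [e1, e2]
    exact ph_mul_le_mul_left H f₁ (ph_mul_le_mul_right H g₂ step)
  apply Set.Subset.antisymm
  · rintro x ⟨f, hf, g, hg, rfl⟩
    refine Set.mem_sInter.2 ?_
    rintro K ⟨⟨hK1, hKm, hKu⟩, hKsub⟩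
    exact hKm f (hKsub (Or.inl hf)) g (hKsub (Or.inr hg))
  · exact Set.sInter_subset_of_mem ⟨hfil, hsub⟩

end Aux

theorem pseudoHoop_filter_product_eq_join {M : Type u} (H : PseudoHoop M)
    (hpre : H.Prelinear)
    (hineq : ∀ x y : M, H.le (H.mul (H.pow x 2) (H.pow y 2)) (H.mul y x))
    (F G : Set M) (hF : H.IsFilter F) (hG : H.IsFilter G) :
    Set.image2 H.mul F G = H.filterGen (F ∪ G) ∧
    Set.image2 H.mul G F = H.filterGen (F ∪ G) := by
  constructor
  · exact ph_image2_eq_filterGen H hineq F G hF hG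
  · rw [show F ∪ G = G ∪ F from Set.union_comm F G]
    exact ph_image2_eq_filterGen H hineq G F hG hF
end
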